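/- In the original four-valued ordered-pair semantics (n = 2), the four-valued tolerant consequence relation ⊨₃ (with designated values {⟨1,1⟩, ⟨1,0⟩, ⟨0,1⟩}) coincides with LP consequence ⊨_LP on propositional formulas. -/

import Mathlib

/-- Helper instance so that instance search for the lexicographic order does not get stuck. -/
instance (n : ℕ) : WellFoundedLT (Fin n) := inferInstance

/-- `2^n`: the `n`-fold product of the two-element Boolean algebra `2 = {0,1}` (as `Bool`,
with `false = 0`, `true = 1`), carrying the lexicographic order. -/
abbrev Tup (n : ℕ) := Lex (Fin n → Bool)

/-- The componentwise complement `-⟨x₁,…,xₙ⟩ = ⟨1-x₁,…,1-xₙ⟩` on `2^n`. -/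
def tneg {n : ℕ} (x : Tup n) : Tup n := toLex fun i => !(ofLex x i)

/-- The top value `⟨1,…,1⟩` of `2^n`. -/
def tTop (n : ℕ) : Tup n := toLex fun _ => true

/-- The bottom value `⟨0,…,0⟩` of `2^n`. -/
def tBot (n : ℕ) : Tup n := toLex fun _ => false

/-- Propositional formulas over connectives `¬`, `∧`, `∨`. -/
inductive PropForm where
  | var : ℕ → PropForm
  | neg : PropForm → PropForm
  | conj : PropForm → PropForm → PropForm
  | disj : PropForm → PropForm → PropForm

/-- The Clemens extension of an `n`-interpretation `v` of the propositional variables: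
`¬` is componentwise complement, `∧` and `∨` are lexicographic min and max. -/
noncomputable def evalT {n : ℕ} (v : ℕ → Tup n) : PropForm → Tup n
  | .var p => v p
  | .neg A => tneg (evalT v A)
  | .conj A B => min (evalT v A) (evalT v B)
  | .disj A B => max (evalT v A) (evalT v B)

/-- The three truth values `f < i < t` (i.e. `0 < 1/2 < 1`). -/
inductive V3 where
  | f | i | t
deriving DecidableEq

instance : Fintype V3 := ⟨{V3.f, V3.i, V3.t}, fun x => by cases x <;> simp⟩

def V3.toFin : V3 → Fin 3
  | .f => 0 | .i => 1 | .t => 2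

instance : LinearOrder V3 := LinearOrder.lift' V3.toFin (by decide)

/-- Three-valued negation: `1 - x`. -/
def V3.negv : V3 → V3
  | .t => .f | .i => .i | .f => .t

/-- The strong Kleene / LP extension of a three-valued interpretation of the
propositional variables. -/
def eval3 (v : ℕ → V3) : PropForm → V3
  | .var p => v p
  | .neg A => (eval3 v A).negv
  | .conj A B => min (eval3 v A) (eval3 v B)
  | .disj A B => max (eval3 v A) (eval3 v B)

/-- The ordered pair `⟨a, b⟩` as an element of `2²`. -/
def pair (a b : Bool) : Tup 2 := toLex ![a, b]


/-! Collapsing `2ⁿ` onto `V3` by `⊥ ↦ f`, `⊤ ↦ t` and everything strictly in between `↦ i` is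
monotone for any bounded order, hence preserves lexicographic `min` and `max`, and (for `n ≥ 1`)
commutes with negation. So it carries the four-valued value of every formula to its LP value under
the collapsed interpretation. For `n ≥ 2` it is surjective, and a value of `2ⁿ` is designated
exactly when it does not collapse to `f`; the two consequence relations therefore coincide. -/

namespace V3

variable {α : Type*} [PartialOrder α] [BoundedOrder α] [DecidableEq α]

def collapse (x : α) : V3 :=
  if x = ⊥ then .f else if x = ⊤ then .t else .i

lemma collapse_eq_f_iff {x : α} : collapse x = .f ↔ x = ⊥ := by
  unfold collapse
  split_ifs <;> simp_all

lemma collapse_monotone : Monotone (collapse : α → V3) := by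
  intro x y hxy
  by_cases hx : x = ⊥
  · rw [collapse_eq_f_iff.mpr hx]
    cases collapse y <;> decide
  have hy_bot : y ≠ ⊥ := fun h => hx (le_bot_iff.mp (h ▸ hxy))
  by_cases hy : y = ⊤
  · rw [show collapse y = .t by rw [collapse, if_neg hy_bot, if_pos hy]]
    cases collapse x <;> decide
  have hx_top : x ≠ ⊤ := fun h => hy (top_le_iff.mp (h ▸ hxy))
  simp [collapse, hx, hy, hx_top, hy_bot]

lemma collapse_surjective {m : α} (hm_bot : m ≠ ⊥) (hm_top : m ≠ ⊤) :
    Function.Surjective (collapse : α → V3) := by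
  rintro (_ | _ | _)
  · exact ⟨⊥, by simp [collapse]⟩
  · exact ⟨m, by simp [collapse, hm_bot, hm_top]⟩
  · exact ⟨⊤, by simp [collapse, (bot_lt_of_lt (lt_top_iff_ne_top.mpr hm_top)).ne']⟩

lemma designated_eq : ({V3.t, V3.i} : Set V3) = {a | a ≠ .f} := by
  ext a
  cases a <;> simp

end V3

section Tup

variable {n : ℕ}

lemma tneg_involutive : Function.Involutive (tneg : Tup n → Tup n) := by
  intro x
  funext i
  simp [tneg]

lemma tneg_eq_bot_iff {x : Tup n} : tneg x = ⊥ ↔ x = ⊤ :=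
  tneg_involutive.injective.eq_iff' rfl

lemma tneg_eq_top_iff {x : Tup n} : tneg x = ⊤ ↔ x = ⊥ :=
  tneg_involutive.injective.eq_iff' rfl

lemma collapse_tneg [NeZero n] (x : Tup n) : V3.collapse (tneg x) = (V3.collapse x).negv := by
  have : (⊥ : Tup n) ≠ ⊤ := bot_ne_top
  unfold V3.collapse
  simp only [tneg_eq_bot_iff, tneg_eq_top_iff]
  split_ifs <;> first | rfl | simp_all

lemma collapse_evalT [NeZero n] (v : ℕ → Tup n) (A : PropForm) :
    V3.collapse (evalT v A) = eval3 (V3.collapse ∘ v) A := by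
  induction A with
  | var p => rfl
  | neg A ih => rw [evalT, eval3, collapse_tneg, ih]
  | conj A B ihA ihB => rw [evalT, eval3, V3.collapse_monotone.map_min, ihA, ihB]
  | disj A B ihA ihB => rw [evalT, eval3, V3.collapse_monotone.map_max, ihA, ihB]

lemma Tup.exists_ne_bot_ne_top (hn : 2 ≤ n) : ∃ m : Tup n, m ≠ ⊥ ∧ m ≠ ⊤ := by
  refine ⟨toLex fun i => decide (i.val = 0), fun h => ?_, fun h => ?_⟩
  · exact Bool.noConfusion (congrFun h ⟨0, by omega⟩ : true = false)
  · exact Bool.noConfusion (congrFun h ⟨1, by omega⟩ : false = true)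

theorem tolerant_iff_LP (hn : 2 ≤ n) (Γ : Set PropForm) (A : PropForm) :
    (∀ v : ℕ → Tup n, (∀ B ∈ Γ, evalT v B ≠ ⊥) → evalT v A ≠ ⊥) ↔
    (∀ v3 : ℕ → V3, (∀ B ∈ Γ, eval3 v3 B ≠ .f) → eval3 v3 A ≠ .f) := by
  have : NeZero n := ⟨by omega⟩
  have designated_iff (v : ℕ → Tup n) (B : PropForm) :
      evalT v B ≠ ⊥ ↔ eval3 (V3.collapse ∘ v) B ≠ .f := by
    rw [← collapse_evalT]
    exact V3.collapse_eq_f_iff.not.symm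
  simp only [designated_iff]
  obtain ⟨m, hm_bot, hm_top⟩ := Tup.exists_ne_bot_ne_top hn
  refine ⟨fun h v3 => ?_, fun h v => h _⟩
  obtain ⟨v, rfl⟩ := (V3.collapse_surjective hm_bot hm_top).comp_left v3
  exact h v

end Tup

lemma pair_designated_eq :
    ({pair true true, pair true false, pair false true} : Set (Tup 2)) = {x | x ≠ ⊥} := by
  ext x
  simp only [Set.mem_insert_iff, Set.mem_singleton_iff, Set.mem_ofPred_eq]
  revert x
  decide

/-- in the original four-valued ordered-pair semantics (`n = 2`), the
tolerant consequence relation `⊨₃` with designated values `{⟨1,1⟩, ⟨1,0⟩, ⟨0,1⟩}`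
coincides with LP consequence `⊨_LP` (designated values `{t, i}`) on propositional
formulas. -/
theorem fourValued_iff_LP (Γ : Set PropForm) (A : PropForm) :
    (∀ v : ℕ → Tup 2,
        (∀ B ∈ Γ, evalT v B ∈ ({pair true true, pair true false, pair false true} :
          Set (Tup 2))) →
        evalT v A ∈ ({pair true true, pair true false, pair false true} : Set (Tup 2))) ↔
    (∀ v3 : ℕ → V3,
        (∀ B ∈ Γ, eval3 v3 B ∈ ({V3.t, V3.i} : Set V3)) →
        eval3 v3 A ∈ ({V3.t, V3.i} : Set V3)) := by
  rw [pair_designated_eq, V3.designated_eq]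
  exact tolerant_iff_LP le_rfl Γ A
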